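/- For semirings R and S, rad_m(R × S) = rad_m(R) × rad_m(S), where rad_m of a semiring T is the intersection of all m-regular right congruences on T (taken to be ∇_T if there are none). -/

import Mathlib

universe u

section Defs

variable (S : Type u) [NonUnitalSemiring S]

structure IsRightAction (M : Type u) [AddCommMonoid M] (act : M → S → M) : Prop where
  add_act : ∀ (m₁ m₂ : M) (s : S), act (m₁ + m₂) s = act m₁ s + act m₂ s
  act_add : ∀ (m : M) (s₁ s₂ : S), act m (s₁ + s₂) = act m s₁ + act m s₂
  act_mul : ∀ (m : M) (s₁ s₂ : S), act m (s₁ * s₂) = act (act m s₁) s₂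
  act_zero : ∀ m : M, act m (0 : S) = 0
  zero_act : ∀ s : S, act (0 : M) s = 0

def IsSubsemimodule (M : Type u) [AddCommMonoid M] (act : M → S → M) (N : Set M) : Prop :=
  (0 : M) ∈ N ∧ (∀ x ∈ N, ∀ y ∈ N, x + y ∈ N) ∧ (∀ x ∈ N, ∀ s : S, act x s ∈ N)

def IsMinimal (M : Type u) [AddCommMonoid M] (act : M → S → M) : Prop :=
  (∃ (m : M) (s : S), act m s ≠ 0) ∧
    ∀ N : Set M, IsSubsemimodule S M act N → N = {(0 : M)} ∨ N = Set.univ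

def IsSemimoduleCong (M : Type u) [AddCommMonoid M] (act : M → S → M)
    (r : M → M → Prop) : Prop :=
  Equivalence r ∧ (∀ a b c : M, r a b → r (a + c) (b + c)) ∧
    (∀ (a b : M) (s : S), r a b → r (act a s) (act b s))

def IsSimple (M : Type u) [AddCommMonoid M] (act : M → S → M) : Prop :=
  IsMinimal S M act ∧ ∀ r : M → M → Prop, IsSemimoduleCong S M act r →
    (∀ a b, r a b → a = b) ∨ (∀ a b, r a b)

def IsRightCongruence (ρ : S → S → Prop) : Prop :=
  Equivalence ρ ∧ (∀ a b c : S, ρ a b → ρ (a + c) (b + c)) ∧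
    (∀ a b c : S, ρ a b → ρ (a * c) (b * c))

def IsCongruence (ρ : S → S → Prop) : Prop :=
  IsRightCongruence S ρ ∧ ∀ a b c : S, ρ a b → ρ (c * a) (c * b)

def IsRegularCong (ρ : S → S → Prop) : Prop := ∃ e : S, ∀ s : S, ρ (e * s) s

def IsRightIdeal (I : Set S) : Prop :=
  (0 : S) ∈ I ∧ (∀ x ∈ I, ∀ y ∈ I, x + y ∈ I) ∧ ∀ x ∈ I, ∀ s : S, x * s ∈ I

def IsSaturated (ρ : S → S → Prop) (I : Set S) : Prop := ∀ s i : S, i ∈ I → ρ s i → s ∈ I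

def IsMaximalSaturatedRightIdeal (ρ : S → S → Prop) (I : Set S) : Prop :=
  IsRightIdeal S I ∧ IsSaturated S ρ I ∧ I ≠ Set.univ ∧
    ∀ J : Set S, IsRightIdeal S J → IsSaturated S ρ J → I ⊆ J → J = I ∨ J = Set.univ

def zeroClass (ρ : S → S → Prop) : Set S := {s : S | ρ s 0}

def IsMRegular (ρ : S → S → Prop) : Prop :=
  IsRightCongruence S ρ ∧ IsRegularCong S ρ ∧
    IsMaximalSaturatedRightIdeal S ρ (zeroClass S ρ)

def IsMaximalRightCongruence (ρ : S → S → Prop) : Prop :=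
  IsRightCongruence S ρ ∧ (∃ a b : S, ¬ ρ a b) ∧
    ∀ τ : S → S → Prop, IsRightCongruence S τ → (∀ a b, ρ a b → τ a b) →
      (∀ a b, τ a b ↔ ρ a b) ∨ (∀ a b, τ a b)

/-- `φ : S → M` realizes `M` as the quotient right `S`-semimodule `S/μ`. -/
def IsQuotientModel (μ : S → S → Prop) (M : Type u) [AddCommMonoid M]
    (act : M → S → M) (φ : S → M) : Prop :=
  Function.Surjective φ ∧ (∀ a b : S, φ (a + b) = φ a + φ b) ∧ φ 0 = 0 ∧
    (∀ (a : S) (s : S), φ (a * s) = act (φ a) s) ∧ ∀ a b : S, φ a = φ b ↔ μ a b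

end Defs

/-- The m-radical of a semiring `T`, as the intersection of all m-regular right
congruences on `T` (the full relation if there are none). -/
def radm (T : Type u) [NonUnitalSemiring T] : T → T → Prop :=
  fun a b => ∀ ρ : T → T → Prop, IsMRegular T ρ → ρ a b

/-!
Pulling a relation back along a surjective homomorphism `T → U` preserves and reflects
m-regularity, since saturated sets of the pulled-back relation are exactly preimages. So the
m-regular right congruences on `R` and `S` pull back to ones on `R × S`, which gives `⊆`.
Conversely, let `ρ` be m-regular on `R × S` with regularity element `e`. The elements `x` with
`x (0 × S) ⊆ [0]_ρ` form a saturated right ideal containing `[0]_ρ`; by maximality it is either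
`[0]_ρ`, and then `R × 0 ⊆ [0]_ρ`, or everything, and then `0 × S ⊆ [0]_ρ` because
`(0, s) ρ e (0, s)`. In the first case `ρ` is pulled back from `S` along the projection, in the
second from `R`.
-/

open Function

lemma Function.Surjective.preimage_eq_univ_iff {α β : Type*} {f : α → β} (hf : Surjective f)
    {s : Set β} : f ⁻¹' s = Set.univ ↔ s = Set.univ := by
  rw [Set.preimage_eq_univ_iff, hf.range_eq, Set.univ_subset_iff]

section Comap

variable {T U : Type u} [NonUnitalSemiring T] [NonUnitalSemiring U] {f : T →ₙ+* U}
  {τ : U → U → Prop}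

lemma equivalence_invImage_iff (hf : Surjective f) :
    Equivalence (InvImage τ f) ↔ Equivalence τ := by
  refine ⟨fun h => ⟨hf.forall.2 h.refl, fun {x y} => ?_, fun {x y z} => ?_⟩,
    fun h => InvImage.equivalence τ f h⟩
  · obtain ⟨a, rfl⟩ := hf x
    obtain ⟨b, rfl⟩ := hf y
    exact h.symm
  · obtain ⟨a, rfl⟩ := hf x
    obtain ⟨b, rfl⟩ := hf y
    obtain ⟨c, rfl⟩ := hf z
    exact h.trans

lemma isRightCongruence_invImage_iff (hf : Surjective f) :
    IsRightCongruence T (InvImage τ f) ↔ IsRightCongruence U τ := by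
  simp only [IsRightCongruence, equivalence_invImage_iff hf, hf.forall₃ (p := fun a b c =>
    τ a b → τ (a + c) (b + c)), hf.forall₃ (p := fun a b c => τ a b → τ (a * c) (b * c)),
    InvImage, map_add, map_mul]

lemma isRegularCong_invImage_iff (hf : Surjective f) :
    IsRegularCong T (InvImage τ f) ↔ IsRegularCong U τ := by
  simp only [IsRegularCong, InvImage, map_mul, hf.forall (p := fun s => τ (_ * s) s)]
  exact (hf.exists (p := fun e => ∀ x, τ (e * f x) (f x))).symm

lemma isRightIdeal_preimage_iff (hf : Surjective f) {I : Set U} :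
    IsRightIdeal T (f ⁻¹' I) ↔ IsRightIdeal U I := by
  simp only [IsRightIdeal, Set.mem_preimage, map_zero, map_add, map_mul, hf.forall]

lemma isSaturated_preimage_iff (hf : Surjective f) {I : Set U} :
    IsSaturated T (InvImage τ f) (f ⁻¹' I) ↔ IsSaturated U τ I := by
  simp only [IsSaturated, Set.mem_preimage, InvImage, hf.forall]

lemma IsSaturated.preimage_image_eq (hτ : ∀ u, τ u u) {J : Set T}
    (hJ : IsSaturated T (InvImage τ f) J) : f ⁻¹' (f '' J) = J := by
  ext x
  refine ⟨fun ⟨y, hy, hyx⟩ => hJ x y hy ?_, fun hx => ⟨x, hx, rfl⟩⟩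
  rw [InvImage, hyx]
  exact hτ _

lemma isMaximalSaturatedRightIdeal_preimage_iff (hf : Surjective f) (hτ : ∀ u, τ u u)
    {I : Set U} :
    IsMaximalSaturatedRightIdeal T (InvImage τ f) (f ⁻¹' I) ↔
      IsMaximalSaturatedRightIdeal U τ I := by
  simp only [IsMaximalSaturatedRightIdeal, isRightIdeal_preimage_iff hf,
    isSaturated_preimage_iff hf, ne_eq, hf.preimage_eq_univ_iff]
  refine and_congr_right fun _ => and_congr_right fun _ => and_congr_right fun _ =>
    ⟨fun h K hK hKsat hIK => ?_, fun h J hJ hJsat hIJ => ?_⟩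
  · have := h (f ⁻¹' K) ((isRightIdeal_preimage_iff hf).2 hK)
      ((isSaturated_preimage_iff hf).2 hKsat) (Set.preimage_mono hIK)
    rwa [hf.preimage_injective.eq_iff, hf.preimage_eq_univ_iff] at this
  · obtain ⟨K, rfl⟩ : ∃ K, J = f ⁻¹' K := ⟨f '' J, (hJsat.preimage_image_eq hτ).symm⟩
    rw [isRightIdeal_preimage_iff hf] at hJ
    rw [isSaturated_preimage_iff hf] at hJsat
    rw [hf.preimage_injective.eq_iff, hf.preimage_eq_univ_iff]
    exact h K hJ hJsat (hf.preimage_subset_preimage_iff.1 hIJ)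

lemma zeroClass_invImage : zeroClass T (InvImage τ f) = f ⁻¹' zeroClass U τ := by
  ext x
  simp [zeroClass, InvImage]

lemma isMRegular_invImage_iff (hf : Surjective f) :
    IsMRegular T (InvImage τ f) ↔ IsMRegular U τ := by
  rw [IsMRegular, IsMRegular, isRightCongruence_invImage_iff hf, isRegularCong_invImage_iff hf,
    zeroClass_invImage]
  exact and_congr_right fun h =>
    and_congr_right fun _ => isMaximalSaturatedRightIdeal_preimage_iff hf h.1.refl

end Comap

lemma radm_map {T U : Type u} [NonUnitalSemiring T] [NonUnitalSemiring U] {f : T →ₙ+* U}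
    (hf : Surjective f) {p q : T} (h : radm T p q) : radm U (f p) (f q) :=
  fun _ hσ => h _ ((isMRegular_invImage_iff hf).2 hσ)

lemma IsMRegular.rel_of_radm {T U : Type u} [NonUnitalSemiring T] [NonUnitalSemiring U]
    {f : T →ₙ+* U} (hf : Surjective f) {ρ : T → T → Prop} {τ : U → U → Prop}
    (hρ : IsMRegular T ρ) (hρτ : ρ = InvImage τ f) {p q : T} (h : radm U (f p) (f q)) :
    ρ p q := by
  subst hρτ
  exact h τ ((isMRegular_invImage_iff hf).1 hρ)

lemma IsMRegular.subset_zeroClass_or {T : Type u} [NonUnitalSemiring T] {ρ : T → T → Prop}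
    (hρ : IsMRegular T ρ) {A : Set T} (hA : ∀ c, ∀ a ∈ A, c * a ∈ A) :
    A ⊆ zeroClass T ρ ∨ ∀ x, (∀ a ∈ A, x * a ∈ zeroClass T ρ) → x ∈ zeroClass T ρ := by
  obtain ⟨⟨hequiv, -, hmul⟩, ⟨e, he⟩, ⟨hI0, hIadd, hImul⟩, hIsat, -, hmax⟩ := hρ
  set I := zeroClass T ρ
  set K : Set T := {x | ∀ a ∈ A, x * a ∈ I}
  have hK : IsRightIdeal T K :=
    ⟨fun a _ => by rwa [zero_mul],
      fun x hx y hy a ha => by rw [add_mul]; exact hIadd _ (hx a ha) _ (hy a ha),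
      fun x hx c a ha => by rw [mul_assoc]; exact hx _ (hA c a ha)⟩
  have hKsat : IsSaturated T ρ K := fun x y hy hxy a ha => hIsat _ _ (hy a ha) (hmul _ _ _ hxy)
  rcases hmax K hK hKsat (fun x hx a _ => hImul x hx a) with hKI | hKuniv
  · exact Or.inr fun x hx => hKI ▸ hx
  · have heK : e ∈ K := hKuniv ▸ Set.mem_univ e
    exact Or.inl fun a ha => hIsat a (e * a) (heK a ha) (hequiv.symm (he a))

section Prod

variable {R S : Type u} [NonUnitalSemiring R] [NonUnitalSemiring S] {ρ : R × S → R × S → Prop}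

lemma IsMRegular.prod_axis_rel_zero (hρ : IsMRegular (R × S) ρ) :
    (∀ r : R, ρ (r, 0) 0) ∨ ∀ s : S, ρ (0, s) 0 := by
  have hA : ∀ c : R × S, ∀ a ∈ Set.range (Prod.mk (0 : R)),
      c * a ∈ Set.range (Prod.mk (0 : R)) := by
    rintro c _ ⟨s, rfl⟩
    exact ⟨c.2 * s, Prod.ext (mul_zero c.1).symm rfl⟩
  rcases hρ.subset_zeroClass_or hA with h | h
  · exact Or.inr fun s => h ⟨s, rfl⟩
  · refine Or.inl fun r => h _ ?_
    rintro _ ⟨s, rfl⟩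
    show ρ _ 0
    rw [Prod.mk_mul_mk, mul_zero, zero_mul, Prod.mk_zero_zero]
    exact hρ.1.1.refl 0

lemma IsRightCongruence.eq_invImage_fst (hρ : IsRightCongruence (R × S) ρ)
    (h : ∀ s : S, ρ (0, s) 0) : ρ = InvImage (InvImage ρ (·, (0 : S))) Prod.fst := by
  have hfst : ∀ a : R × S, ρ a (a.1, 0) := fun a => by
    simpa using hρ.2.1 _ _ (a.1, 0) (h a.2)
  ext a b
  exact ⟨fun hab => hρ.1.trans (hρ.1.symm (hfst a)) (hρ.1.trans hab (hfst b)),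
    fun hab => hρ.1.trans (hfst a) (hρ.1.trans hab (hρ.1.symm (hfst b)))⟩

lemma IsRightCongruence.eq_invImage_snd (hρ : IsRightCongruence (R × S) ρ)
    (h : ∀ r : R, ρ (r, 0) 0) : ρ = InvImage (InvImage ρ (Prod.mk (0 : R))) Prod.snd := by
  have hsnd : ∀ a : R × S, ρ a (0, a.2) := fun a => by
    simpa using hρ.2.1 _ _ (0, a.2) (h a.1)
  ext a b
  exact ⟨fun hab => hρ.1.trans (hρ.1.symm (hsnd a)) (hρ.1.trans hab (hsnd b)),
    fun hab => hρ.1.trans (hsnd a) (hρ.1.trans hab (hρ.1.symm (hsnd b)))⟩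

end Prod

/-- `rad_m(R × S) = rad_m(R) × rad_m(S)`. -/
theorem radm_prod {R S : Type u} [NonUnitalSemiring R] [NonUnitalSemiring S] :
    ∀ p q : R × S, radm (R × S) p q ↔ radm R p.1 q.1 ∧ radm S p.2 q.2 := by
  intro p q
  refine ⟨fun h => ⟨radm_map (f := NonUnitalRingHom.fst R S) Prod.fst_surjective h,
    radm_map (f := NonUnitalRingHom.snd R S) Prod.snd_surjective h⟩, ?_⟩
  rintro ⟨h₁, h₂⟩ ρ hρ
  rcases hρ.prod_axis_rel_zero with hR | hS
  · exact hρ.rel_of_radm (f := NonUnitalRingHom.snd R S) Prod.snd_surjective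
      (hρ.1.eq_invImage_snd hR) h₂
  · exact hρ.rel_of_radm (f := NonUnitalRingHom.fst R S) Prod.fst_surjective
      (hρ.1.eq_invImage_fst hS) h₁
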